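/- Let Q denote the standard Gaussian tail function. Then the ratio Q(t + log(1/Q(t) − 1)/(2t)) / Q(t) tends to 0 as t → +∞. (This is Proposition 2, part 1: writing P_e = Q(t) for the subchannel error probability and P'_e = Q(t + log(1/P_e − 1)/(2t)) for the probability that the path does not split and the bit is incorrectly decoded, one has P'_e = o(P_e) as P_e → 0⁺.) -/

import Mathlib

/-!
For `s > t` and `a ≥ 0` one has `(s + a)² ≥ s² + 2at + a²`, so translating the Gaussian tail
integral by `a` gives `Q(t + a) ≤ e^{-at - a²/2} Q(t)`. Taking `t = 0` yields
`Q(x) ≤ e^{-x²/2} / 2`, hence `log (1/Q(t) - 1) ≥ t²/2`. With the shift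
`a = log (1/Q(t) - 1) / (2t)` the exponent `at` is at least `t²/4`, so the ratio is at most
`e^{-t²/4}`.
-/

open Real Filter Topology

noncomputable def gaussQ (x : ℝ) : ℝ :=
  (1 / Real.sqrt (2 * Real.pi)) * ∫ t in Set.Ioi x, Real.exp (-t ^ 2 / 2)

open MeasureTheory Set

theorem integral_Ioi_comp_add_right {E : Type*} [NormedAddCommGroup E] [NormedSpace ℝ E]
    (g : ℝ → E) (t a : ℝ) : ∫ s in Ioi t, g (s + a) = ∫ s in Ioi (t + a), g s := by
  simpa using (measurePreserving_add_right volume a).setIntegral_preimage_emb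
    (measurableEmbedding_addRight a) g (Ioi (t + a))

theorem integrable_exp_neg_sq_div_two : Integrable fun s : ℝ => exp (-s ^ 2 / 2) := by
  simpa [neg_div, div_eq_inv_mul] using integrable_exp_neg_mul_sq (by norm_num : (0 : ℝ) < 1 / 2)

theorem gaussQ_pos (x : ℝ) : 0 < gaussQ x := by
  have : NeZero (volume.restrict (Ioi x)) := ⟨by simp⟩
  exact mul_pos (by positivity) (integral_exp_pos integrable_exp_neg_sq_div_two.integrableOn)

theorem gaussQ_zero : gaussQ 0 = 1 / 2 := by
  have h : ∫ s in Ioi (0 : ℝ), exp (-s ^ 2 / 2) = √(2 * π) / 2 := by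
    convert integral_gaussian_Ioi (1 / 2) using 4 <;> ring
  rw [gaussQ, h]
  field_simp

theorem gaussQ_add_le {a : ℝ} (ha : 0 ≤ a) (t : ℝ) :
    gaussQ (t + a) ≤ exp (-(a * t + a ^ 2 / 2)) * gaussQ t := by
  have hpoint : ∀ s ∈ Ioi t,
      exp (-(s + a) ^ 2 / 2) ≤ exp (-(a * t + a ^ 2 / 2)) * exp (-s ^ 2 / 2) := by
    intro s hs
    rw [← exp_add, exp_le_exp]
    nlinarith [mem_Ioi.mp hs]
  have hint : ∫ s in Ioi (t + a), exp (-s ^ 2 / 2)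
      ≤ exp (-(a * t + a ^ 2 / 2)) * ∫ s in Ioi t, exp (-s ^ 2 / 2) := by
    rw [← integral_Ioi_comp_add_right, ← integral_const_mul]
    exact setIntegral_mono_on (integrable_exp_neg_sq_div_two.comp_add_right a).integrableOn
      (integrable_exp_neg_sq_div_two.integrableOn.const_mul _) measurableSet_Ioi hpoint
  rw [gaussQ, gaussQ, mul_left_comm]
  exact mul_le_mul_of_nonneg_left hint (by positivity)

theorem gaussQ_add_div_le {a : ℝ} (ha : 0 ≤ a) (t : ℝ) :
    gaussQ (t + a) / gaussQ t ≤ exp (-(a * t)) := by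
  rw [div_le_iff₀ (gaussQ_pos t)]
  refine (gaussQ_add_le ha t).trans (mul_le_mul_of_nonneg_right ?_ (gaussQ_pos t).le)
  exact exp_le_exp.mpr (by nlinarith [sq_nonneg a])

theorem gaussQ_le_exp {x : ℝ} (hx : 0 ≤ x) : gaussQ x ≤ exp (-(x ^ 2 / 2)) / 2 := by
  simpa [gaussQ_zero, div_eq_mul_inv] using gaussQ_add_le hx 0

theorem sq_div_two_le_log_inv_gaussQ_sub_one {t : ℝ} (ht : 0 ≤ t) :
    t ^ 2 / 2 ≤ log (1 / gaussQ t - 1) := by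
  have hE : 1 ≤ exp (t ^ 2 / 2) := one_le_exp (by positivity)
  have hinv : 2 * exp (t ^ 2 / 2) ≤ 1 / gaussQ t := by
    rw [le_div_iff₀ (gaussQ_pos t)]
    calc 2 * exp (t ^ 2 / 2) * gaussQ t
        ≤ 2 * exp (t ^ 2 / 2) * (exp (-(t ^ 2 / 2)) / 2) := by gcongr; exact gaussQ_le_exp ht
      _ = 1 := by rw [exp_neg]; field_simp
  rw [le_log_iff_exp_le (by linarith)]
  linarith

theorem tendsto_exp_neg_sq_div_four : Tendsto (fun t : ℝ => exp (-(t ^ 2 / 4))) atTop (𝓝 0) :=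
  tendsto_exp_atBot.comp <| tendsto_neg_atTop_atBot.comp <|
    (tendsto_pow_atTop two_ne_zero).atTop_div_const (by norm_num)

/-- Proposition 2, part 1: `Q(t + log(1/Q(t) − 1)/(2t)) / Q(t) → 0` as `t → +∞`. -/
theorem gaussQ_ratio_tendsto_zero :
    Tendsto (fun t : ℝ =>
        gaussQ (t + Real.log (1 / gaussQ t - 1) / (2 * t)) / gaussQ t)
      atTop (𝓝 0) := by
  have hbound : ∀ᶠ t in atTop,
      gaussQ (t + log (1 / gaussQ t - 1) / (2 * t)) / gaussQ t ≤ exp (-(t ^ 2 / 4)) := by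
    filter_upwards [eventually_gt_atTop 0] with t ht
    have hlog := sq_div_two_le_log_inv_gaussQ_sub_one ht.le
    have hshift : 0 ≤ log (1 / gaussQ t - 1) / (2 * t) :=
      div_nonneg ((by positivity : (0 : ℝ) ≤ t ^ 2 / 2).trans hlog) (by positivity)
    have hexponent : t ^ 2 / 4 ≤ log (1 / gaussQ t - 1) / (2 * t) * t := by
      rw [div_mul_eq_mul_div, le_div_iff₀ (by positivity)]
      nlinarith
    exact (gaussQ_add_div_le hshift t).trans (exp_le_exp.mpr (neg_le_neg hexponent))
  exact tendsto_of_tendsto_of_tendsto_of_le_of_le' tendsto_const_nhds tendsto_exp_neg_sq_div_four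
    (Eventually.of_forall fun t => div_nonneg (gaussQ_pos _).le (gaussQ_pos t).le) hbound
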